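/- Fix β > 0. Then, as m → ∞, the sum over all ordered triples (m1, m2, m3) of non-negative integers with m1 + m2 + m3 = m − 1 of p_m(m1, m2, m3) · (m1/m)^β converges to 1/(1 + 2β). -/

import Mathlib

open Filter Finset Real

/-- `c j = (2j-5)‼`, the number of leaf-labeled binary trees on `j` leaves
(note `c 2 = 0‼ = 1` by truncated subtraction, as required). -/
def treeCount (j : ℕ) : ℕ := Nat.doubleFactorial (2 * j - 5)

/-- The split-size probability
`p_m(m₁,m₂,m₃) = (m!/(m₁! m₂! m₃!)) c(m₁+2) c(m₂+2) c(m₃+2) / (m c(m+2))`. -/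
noncomputable def splitProb (m m1 m2 m3 : ℕ) : ℝ :=
  (m.factorial : ℝ) / ((m1.factorial : ℝ) * (m2.factorial : ℝ) * (m3.factorial : ℝ)) *
      ((treeCount (m1 + 2) : ℝ) * (treeCount (m2 + 2) : ℝ) * (treeCount (m3 + 2) : ℝ)) /
    ((m : ℝ) * (treeCount (m + 2) : ℝ))

/-! Summing out `m₂ + m₃ = j` with the convolution `∑_{b+c=j} c(b+2) c(c+2) / (b! c!) = 2^j`
leaves the law `splitWeight M` of `m₁` under `p_{M+1}`. Its binomial moments are exact,
`E[C(m₁, n)] = C(M, n) / (2n+1)`, so `E[(m₁/m)^n] → 1/(2n+1) = ∫₀¹ tⁿ t^{-1/2}/2 dt` for every `n`.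
Weierstrass approximation of `t ↦ t^β` on `[0, 1]` turns convergence of the polynomial moments
into convergence of the `β`-th moment. -/

open scoped Nat Topology

theorem Finset.Nat.sum_antidiagonalTuple_succ {M : Type*} [AddCommMonoid M] (k n : ℕ)
    (f : (Fin (k + 1) → ℕ) → M) :
    ∑ x ∈ antidiagonalTuple (k + 1) n, f x =
      ∑ p ∈ antidiagonal n, ∑ y ∈ antidiagonalTuple k p.2, f (Fin.cons p.1 y) := by
  rw [sum_sigma']
  refine sum_nbij' (fun x => ⟨(x 0, ∑ i, Fin.tail x i), Fin.tail x⟩)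
    (fun y => Fin.cons y.1.1 y.2) ?_ ?_ ?_ ?_ ?_
  · intro x hx
    rw [mem_antidiagonalTuple, Fin.sum_univ_succ] at hx
    simp [mem_sigma, HasAntidiagonal.mem_antidiagonal, mem_antidiagonalTuple, Fin.tail, hx]
  · rintro ⟨⟨a, j⟩, y⟩ hy
    simp only [mem_sigma, HasAntidiagonal.mem_antidiagonal, mem_antidiagonalTuple] at hy
    simp [mem_antidiagonalTuple, Fin.sum_univ_succ, hy.2, hy.1]
  · intro x _
    simp
  · rintro ⟨⟨a, j⟩, y⟩ hy
    simp only [mem_sigma, HasAntidiagonal.mem_antidiagonal, mem_antidiagonalTuple] at hy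
    simp [Fin.tail, hy.2]
  · intro x _
    simp

theorem Finset.Nat.two_mul_sum_antidiagonal_fst_mul {R : Type*} [CommSemiring R] (g : ℕ → R)
    (n : ℕ) :
    2 * ∑ p ∈ antidiagonal n, (p.1 : R) * (g p.1 * g p.2) =
      n * ∑ p ∈ antidiagonal n, g p.1 * g p.2 := by
  have hswap : ∑ p ∈ antidiagonal n, (p.1 : R) * (g p.1 * g p.2) =
      ∑ p ∈ antidiagonal n, (p.2 : R) * (g p.1 * g p.2) := by
    rw [← sum_antidiagonal_swap (f := fun p => (p.2 : R) * (g p.1 * g p.2))]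
    exact sum_congr rfl fun p _ => by simp only [Prod.fst_swap, Prod.snd_swap]; ring
  rw [two_mul]
  nth_rw 2 [hswap]
  rw [← sum_add_distrib, mul_sum]
  refine sum_congr rfl fun p hp => ?_
  rw [← add_mul, ← Nat.cast_add, mem_antidiagonal.mp hp]

theorem treeCount_add_three (k : ℕ) : treeCount (k + 3) = (2 * k + 1) * treeCount (k + 2) := by
  rw [treeCount, treeCount, show 2 * (k + 3) - 5 = 2 * k + 1 by omega,
    Nat.doubleFactorial_add_one, show 2 * (k + 2) - 5 = 2 * k - 1 by omega]

theorem treeCount_pos (k : ℕ) : 0 < treeCount k := Nat.doubleFactorial_pos _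

theorem sum_antidiagonal_treeCount_div_factorial (j : ℕ) :
    ∑ p ∈ antidiagonal j,
      (treeCount (p.1 + 2) : ℝ) / p.1 ! * ((treeCount (p.2 + 2) : ℝ) / p.2 !) = 2 ^ j := by
  set a : ℕ → ℝ := fun k => (treeCount (k + 2) : ℝ) / (k ! : ℝ)
  have ha : ∀ k : ℕ, (k + 1 : ℝ) * a (k + 1) = (2 * k + 1) * a k := fun k => by
    simp only [a, Nat.factorial_succ, treeCount_add_three, Nat.cast_mul]
    field_simp
    push_cast
    ring
  change ∑ p ∈ antidiagonal j, a p.1 * a p.2 = 2 ^ j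
  induction j with
  | zero => simp [a, treeCount]
  | succ j ih =>
    have key : (j + 1 : ℝ) * ∑ p ∈ antidiagonal (j + 1), a p.1 * a p.2 =
        (j + 1) * (2 * 2 ^ j) := by
      calc (j + 1 : ℝ) * ∑ p ∈ antidiagonal (j + 1), a p.1 * a p.2
          = 2 * ∑ p ∈ antidiagonal (j + 1), (p.1 : ℝ) * (a p.1 * a p.2) := by
            rw [Finset.Nat.two_mul_sum_antidiagonal_fst_mul]; push_cast; ring
        _ = 2 * ∑ p ∈ antidiagonal j, (2 * (p.1 : ℝ) + 1) * (a p.1 * a p.2) := by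
            rw [Finset.Nat.sum_antidiagonal_succ]
            simp only [Nat.cast_zero, zero_mul, zero_add, Nat.cast_succ, ← mul_assoc, ha]
        _ = 2 * (2 * ∑ p ∈ antidiagonal j, (p.1 : ℝ) * (a p.1 * a p.2) +
              ∑ p ∈ antidiagonal j, a p.1 * a p.2) := by
            congr 1
            rw [mul_sum, ← sum_add_distrib]
            exact sum_congr rfl fun p _ => by ring
        _ = (j + 1) * (2 * 2 ^ j) := by
            rw [Finset.Nat.two_mul_sum_antidiagonal_fst_mul, ih]; ring
    rw [pow_succ]
    linarith [mul_left_cancel₀ (by positivity : (j + 1 : ℝ) ≠ 0) key]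

noncomputable def splitWeight (M k : ℕ) : ℝ :=
  M ! * ((treeCount (k + 2) : ℝ) / (k ! : ℝ)) * 2 ^ (M - k) / treeCount (M + 3)

theorem splitProb_succ (M a b c : ℕ) :
    splitProb (M + 1) a b c = M ! / treeCount (M + 3) *
      ((treeCount (a + 2) : ℝ) / a ! * ((treeCount (b + 2) : ℝ) / b ! *
        ((treeCount (c + 2) : ℝ) / (c ! : ℝ)))) := by
  rw [splitProb, Nat.factorial_succ]
  push_cast
  field_simp

theorem sum_antidiagonalTuple_splitProb_mul (M : ℕ) (f : ℕ → ℝ) :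
    ∑ x ∈ Finset.Nat.antidiagonalTuple 3 M, splitProb (M + 1) (x 0) (x 1) (x 2) * f (x 0) =
      ∑ k ∈ range (M + 1), splitWeight M k * f k := by
  rw [Finset.Nat.sum_antidiagonalTuple_succ, Finset.Nat.sum_antidiagonal_eq_sum_range_succ_mk]
  refine sum_congr rfl fun k _ => ?_
  simp only [Finset.Nat.antidiagonalTuple_two, sum_map, Function.Embedding.coeFn_mk,
    piFinTwoEquiv_symm_apply, Matrix.finZeroElim_eq_zero, Matrix.zero_empty,
    Matrix.Fin.cons_vecEmpty, Matrix.Fin.cons_vecCons, Fin.cons_zero, Matrix.cons_val,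
    splitProb_succ]
  rw [← sum_mul, ← mul_sum, ← mul_sum, sum_antidiagonal_treeCount_div_factorial, splitWeight]
  ring

theorem splitWeight_nonneg (M k : ℕ) : 0 ≤ splitWeight M k := by
  unfold splitWeight; positivity

theorem splitWeight_self (M : ℕ) : splitWeight M M = 1 / (2 * M + 1) := by
  have := treeCount_pos (M + 2)
  rw [splitWeight, Nat.sub_self, treeCount_add_three]
  push_cast
  field_simp

theorem splitWeight_succ_of_le {M k : ℕ} (hk : k ≤ M) :
    splitWeight (M + 1) k = 2 * (M + 1) / (2 * M + 3) * splitWeight M k := by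
  have := treeCount_pos (M + 2)
  rw [splitWeight, splitWeight, show M + 1 + 3 = M + 1 + 2 + 1 by rfl, treeCount_add_three,
    treeCount_add_three, Nat.factorial_succ, show M + 1 - k = M - k + 1 by omega, pow_succ]
  push_cast
  field_simp
  ring

theorem sum_splitWeight_mul_choose (M n : ℕ) :
    ∑ k ∈ range (M + 1), splitWeight M k * k.choose n = M.choose n / (2 * n + 1) := by
  induction M with
  | zero => cases n <;> simp [splitWeight_self]
  | succ M ih =>
    have hchoose : ((M + 1 : ℕ) : ℝ) * (M + 1).choose n =
        (M + 1) * M.choose n + n * (M + 1).choose n := by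
      rcases n with _ | n
      · simp
      · have h := congrArg (Nat.cast (R := ℝ)) (Nat.add_one_mul_choose_eq M n)
        rw [Nat.choose_succ_succ'] at h ⊢
        push_cast at h ⊢
        linear_combination h
    rw [sum_range_succ, splitWeight_self,
      sum_congr rfl fun k hk => by rw [splitWeight_succ_of_le (mem_range_succ_iff.mp hk)]]
    simp only [mul_assoc, ← mul_sum, ih]
    field_simp
    push_cast at hchoose ⊢
    linear_combination -2 * (2 * (M : ℝ) + 3) * hchoose

theorem sum_splitWeight (M : ℕ) : ∑ k ∈ range (M + 1), splitWeight M k = 1 := by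
  simpa using sum_splitWeight_mul_choose M 0

theorem Finset.abs_prod_sub_prod_le_sum {ι : Type*} (s : Finset ι)
    {a b : ι → ℝ} (ha : ∀ i ∈ s, a i ∈ Set.Icc 0 1) (hb : ∀ i ∈ s, b i ∈ Set.Icc 0 1) :
    |∏ i ∈ s, a i - ∏ i ∈ s, b i| ≤ ∑ i ∈ s, |a i - b i| := by
  classical
  induction s using Finset.induction_on with
  | empty => simp
  | insert j s hj ih =>
    simp only [mem_insert, forall_eq_or_imp] at ha hb
    have hprod : |∏ i ∈ s, b i| ≤ 1 := by
      rw [abs_of_nonneg (prod_nonneg fun i hi => (hb.2 i hi).1)]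
      exact prod_le_one (fun i hi => (hb.2 i hi).1) fun i hi => (hb.2 i hi).2
    have haj : |a j| ≤ 1 := abs_le.mpr ⟨by linarith [ha.1.1], ha.1.2⟩
    rw [prod_insert hj, prod_insert hj, sum_insert hj]
    calc |a j * ∏ i ∈ s, a i - b j * ∏ i ∈ s, b i|
        = |a j * (∏ i ∈ s, a i - ∏ i ∈ s, b i) + (a j - b j) * ∏ i ∈ s, b i| := by ring_nf
      _ ≤ |a j| * |∏ i ∈ s, a i - ∏ i ∈ s, b i| + |a j - b j| * |∏ i ∈ s, b i| := by
        rw [← abs_mul, ← abs_mul]; exact abs_add_le _ _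
      _ ≤ 1 * ∑ i ∈ s, |a i - b i| + |a j - b j| * 1 := by
        gcongr
        exact ih ha.2 hb.2
      _ = |a j - b j| + ∑ i ∈ s, |a i - b i| := by ring

theorem abs_div_pow_sub_descFactorial_div_pow_le {k N : ℕ} (hk : k ≤ N) (n : ℕ) :
    |((k : ℝ) / N) ^ n - k.descFactorial n / (N : ℝ) ^ n| ≤ n ^ 2 / N := by
  have hunit : ∀ j : ℕ, j ≤ N → (j : ℝ) / N ∈ Set.Icc 0 1 := fun j hj =>
    ⟨by positivity, div_le_one_of_le₀ (by exact_mod_cast hj) (by positivity)⟩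
  have hstep : ∀ i ∈ range n, |(k : ℝ) / N - ((k - i : ℕ) : ℝ) / N| ≤ n / N := by
    intro i hi
    rw [← sub_div, abs_div, Nat.abs_cast]
    gcongr
    have hle : ((k - i : ℕ) : ℝ) ≤ k := by exact_mod_cast Nat.sub_le k i
    have hge : (k : ℝ) ≤ (k - i : ℕ) + n := by
      exact_mod_cast (show k ≤ k - i + n by have := mem_range.mp hi; omega)
    exact abs_le.mpr ⟨by linarith, by linarith⟩
  have hpow : ∀ x : ℝ, x ^ n = ∏ _i ∈ range n, x := fun x => by rw [prod_const, card_range]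
  rw [Nat.descFactorial_eq_prod_range, Nat.cast_prod, hpow ((k : ℝ) / N), hpow (N : ℝ),
    ← prod_div_distrib]
  calc _ ≤ ∑ i ∈ range n, |(k : ℝ) / N - ((k - i : ℕ) : ℝ) / N| :=
        abs_prod_sub_prod_le_sum _ (fun _ _ => hunit k hk) fun i _ => hunit _ (by omega)
    _ ≤ ∑ _i ∈ range n, (n : ℝ) / N := sum_le_sum hstep
    _ = n ^ 2 / N := by rw [sum_const, card_range, nsmul_eq_mul]; ring

theorem sum_splitWeight_mul_descFactorial (M n : ℕ) :
    ∑ k ∈ range (M + 1), splitWeight M k * (k.descFactorial n / ((M + 1 : ℕ) : ℝ) ^ n) =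
      (M + 1).descFactorial (n + 1) / ((M + 1 : ℕ) : ℝ) ^ (n + 1) / (2 * n + 1) := by
  rw [Nat.succ_descFactorial_succ]
  simp only [Nat.descFactorial_eq_factorial_mul_choose, Nat.cast_mul, mul_div_assoc',
    mul_left_comm _ (n ! : ℝ), ← mul_sum, ← sum_div, sum_splitWeight_mul_choose]
  field_simp
  ring

theorem tendsto_descFactorial_div_pow (n : ℕ) :
    Tendsto (fun N : ℕ => (N.descFactorial n : ℝ) / (N : ℝ) ^ n) atTop (𝓝 1) := by
  refine (Asymptotics.isEquivalent_iff_tendsto_one ?_).mp (isEquivalent_descFactorial n)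
  filter_upwards [eventually_ne_atTop 0] with N hN
  positivity

theorem tendsto_sum_splitWeight_mul_pow (n : ℕ) :
    Tendsto (fun M : ℕ => ∑ k ∈ range (M + 1), splitWeight M k * ((k : ℝ) / (M + 1 : ℕ)) ^ n)
      atTop (𝓝 (1 / (2 * n + 1))) := by
  have hdesc : Tendsto (fun M : ℕ => ∑ k ∈ range (M + 1),
      splitWeight M k * (k.descFactorial n / ((M + 1 : ℕ) : ℝ) ^ n)) atTop
      (𝓝 (1 / (2 * n + 1))) := by
    simp only [sum_splitWeight_mul_descFactorial, div_eq_mul_inv _ (2 * (n : ℝ) + 1)]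
    exact ((tendsto_descFactorial_div_pow (n + 1)).comp (tendsto_add_atTop_nat 1)).mul_const _
  have hbound : ∀ M : ℕ, dist (∑ k ∈ range (M + 1),
        splitWeight M k * (k.descFactorial n / ((M + 1 : ℕ) : ℝ) ^ n))
      (∑ k ∈ range (M + 1), splitWeight M k * ((k : ℝ) / (M + 1 : ℕ)) ^ n) ≤
        (n : ℝ) ^ 2 / (M + 1 : ℕ) := fun M => by
    rw [dist_eq_norm, ← sum_sub_distrib, ← mul_one ((n : ℝ) ^ 2 / _), ← sum_splitWeight M, mul_sum]
    refine (norm_sum_le _ _).trans (sum_le_sum fun k hk => ?_)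
    rw [← mul_sub, norm_mul, Real.norm_of_nonneg (splitWeight_nonneg M k), mul_comm, norm_sub_rev]
    exact mul_le_mul_of_nonneg_right
      (abs_div_pow_sub_descFactorial_div_pow_le (mem_range.mp hk).le n) (splitWeight_nonneg M k)
  have hzero : Tendsto (fun M : ℕ => (n : ℝ) ^ 2 / (M + 1 : ℕ)) atTop (𝓝 0) :=
    tendsto_const_nhds.div_atTop (tendsto_natCast_atTop_atTop.comp (tendsto_add_atTop_nat 1))
  exact hdesc.congr_dist (squeeze_zero (fun _ => dist_nonneg) hbound hzero)

section MomentMethod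

open MeasureTheory Polynomial

variable {α ι : Type*} {l : Filter α} {s : α → Finset ι} {w x : α → ι → ℝ} {g : ℝ → ℝ}

theorem tendsto_sum_mul_eval_of_tendsto_moments (hgi : IntervalIntegrable g volume 0 1)
    (hmom : ∀ n : ℕ, Tendsto (fun a => ∑ i ∈ s a, w a i * x a i ^ n) l
      (𝓝 (∫ t in (0 : ℝ)..1, t ^ n * g t))) (p : ℝ[X]) :
    Tendsto (fun a => ∑ i ∈ s a, w a i * p.eval (x a i)) l
      (𝓝 (∫ t in (0 : ℝ)..1, p.eval t * g t)) := by
  induction p using Polynomial.induction_on' with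
  | add p q hp hq =>
    have hint : ∀ r : ℝ[X], IntervalIntegrable (fun t => r.eval t * g t) volume 0 1 :=
      fun r => hgi.continuousOn_mul r.continuous.continuousOn
    simp only [eval_add, mul_add, add_mul, sum_add_distrib]
    rw [intervalIntegral.integral_add (hint p) (hint q)]
    exact hp.add hq
  | monomial n c =>
    simp only [eval_monomial, mul_left_comm _ c, ← mul_sum, mul_assoc,
      intervalIntegral.integral_const_mul]
    exact (hmom n).const_mul c

theorem tendsto_sum_mul_of_tendsto_moments (hw : ∀ a, ∀ i ∈ s a, 0 ≤ w a i)
    (hmass : ∀ a, ∑ i ∈ s a, w a i ≤ 1) (hx : ∀ a, ∀ i ∈ s a, x a i ∈ Set.Icc 0 1)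
    (hg : ∀ t ∈ Set.Icc (0 : ℝ) 1, 0 ≤ g t) (hgi : IntervalIntegrable g volume 0 1)
    (hmom : ∀ n : ℕ, Tendsto (fun a => ∑ i ∈ s a, w a i * x a i ^ n) l
      (𝓝 (∫ t in (0 : ℝ)..1, t ^ n * g t)))
    {f : ℝ → ℝ} (hf : ContinuousOn f (Set.Icc 0 1)) :
    Tendsto (fun a => ∑ i ∈ s a, w a i * f (x a i)) l (𝓝 (∫ t in (0 : ℝ)..1, f t * g t)) := by
  rw [Metric.tendsto_nhds]
  intro ε hε
  set I := ∫ t in (0 : ℝ)..1, g t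
  have hI : 0 ≤ I := intervalIntegral.integral_nonneg zero_le_one hg
  set δ := ε / (2 * (1 + I))
  have hδ : 0 < δ := by positivity
  obtain ⟨p, hp⟩ := exists_polynomial_near_of_continuousOn 0 1 f hf δ hδ
  filter_upwards [Metric.tendsto_nhds.mp (tendsto_sum_mul_eval_of_tendsto_moments hgi hmom p)
    (ε / 2) (half_pos hε)] with a ha
  have hsum : dist (∑ i ∈ s a, w a i * f (x a i)) (∑ i ∈ s a, w a i * p.eval (x a i)) ≤ δ := by
    rw [dist_eq_norm, ← sum_sub_distrib]
    calc _ ≤ ∑ i ∈ s a, w a i * δ := by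
          refine (norm_sum_le _ _).trans (sum_le_sum fun i hi => ?_)
          rw [← mul_sub, norm_mul, Real.norm_of_nonneg (hw a i hi), Real.norm_eq_abs, abs_sub_comm]
          exact mul_le_mul_of_nonneg_left (hp _ (hx a i hi)).le (hw a i hi)
      _ ≤ δ := by
          rw [← sum_mul]
          exact mul_le_of_le_one_left hδ.le (hmass a)
  have hint : dist (∫ t in (0 : ℝ)..1, p.eval t * g t) (∫ t in (0 : ℝ)..1, f t * g t) ≤
      δ * I := by
    have hfg : IntervalIntegrable (fun t => f t * g t) volume 0 1 :=
      hgi.continuousOn_mul (by rwa [Set.uIcc_of_le zero_le_one])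
    rw [dist_eq_norm, ← intervalIntegral.integral_sub
      (hgi.continuousOn_mul p.continuous.continuousOn) hfg, ← intervalIntegral.integral_const_mul]
    refine intervalIntegral.norm_integral_le_of_norm_le zero_le_one
      (Eventually.of_forall fun t ht => ?_) (hgi.const_mul δ)
    have hgt := hg t (Set.Ioc_subset_Icc_self ht)
    rw [← sub_mul, norm_mul, Real.norm_of_nonneg hgt]
    exact mul_le_mul_of_nonneg_right (hp t (Set.Ioc_subset_Icc_self ht)).le hgt
  calc dist (∑ i ∈ s a, w a i * f (x a i)) (∫ t in (0 : ℝ)..1, f t * g t)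
      ≤ dist (∑ i ∈ s a, w a i * f (x a i)) (∑ i ∈ s a, w a i * p.eval (x a i)) +
        dist (∑ i ∈ s a, w a i * p.eval (x a i)) (∫ t in (0 : ℝ)..1, p.eval t * g t) +
        dist (∫ t in (0 : ℝ)..1, p.eval t * g t) (∫ t in (0 : ℝ)..1, f t * g t) :=
        dist_triangle4 _ _ _ _
    _ < δ + ε / 2 + δ * I := by linarith
    _ = ε := by simp only [δ]; field_simp; ring

end MomentMethod

noncomputable def betaHalfOneDensity (t : ℝ) : ℝ := t ^ (-(1 / 2) : ℝ) / 2

theorem betaHalfOneDensity_nonneg {t : ℝ} (ht : 0 ≤ t) : 0 ≤ betaHalfOneDensity t := by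
  unfold betaHalfOneDensity; positivity

theorem intervalIntegrable_betaHalfOneDensity :
    IntervalIntegrable betaHalfOneDensity MeasureTheory.volume 0 1 :=
  (intervalIntegral.intervalIntegrable_rpow' (by norm_num)).div_const 2

theorem integral_rpow_mul_betaHalfOneDensity {c : ℝ} (hc : -(1 / 2) < c) :
    ∫ t in (0 : ℝ)..1, t ^ c * betaHalfOneDensity t = 1 / (2 * c + 1) := by
  have hae : ∀ᵐ t ∂MeasureTheory.volume, t ∈ Set.uIoc (0 : ℝ) 1 →
      t ^ c * betaHalfOneDensity t = t ^ (c - 1 / 2) / 2 := by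
    filter_upwards with t ht
    rw [Set.uIoc_of_le zero_le_one] at ht
    rw [betaHalfOneDensity, ← mul_div_assoc, ← Real.rpow_add ht.1, sub_eq_add_neg]
  rw [intervalIntegral.integral_congr_ae hae, intervalIntegral.integral_div,
    integral_rpow (Or.inl (by linarith)), Real.one_rpow, Real.zero_rpow (by linarith)]
  field_simp
  ring

theorem tendsto_sum_splitWeight_mul {f : ℝ → ℝ} (hf : ContinuousOn f (Set.Icc 0 1)) :
    Tendsto (fun M : ℕ => ∑ k ∈ range (M + 1), splitWeight M k * f ((k : ℝ) / (M + 1 : ℕ)))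
      atTop (𝓝 (∫ t in (0 : ℝ)..1, f t * betaHalfOneDensity t)) := by
  refine tendsto_sum_mul_of_tendsto_moments (fun M k _ => splitWeight_nonneg M k)
    (fun M => (sum_splitWeight M).le) (fun M k hk => ?_)
    (fun t ht => betaHalfOneDensity_nonneg ht.1) intervalIntegrable_betaHalfOneDensity
    (fun n => ?_) hf
  · exact ⟨by positivity,
      div_le_one_of_le₀ (by exact_mod_cast (mem_range.mp hk).le) (by positivity)⟩
  · simp_rw [← Real.rpow_natCast, integral_rpow_mul_betaHalfOneDensity
      (by linarith [n.cast_nonneg (α := ℝ)] : -(1 / 2) < (n : ℝ)), Real.rpow_natCast]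
    exact tendsto_sum_splitWeight_mul_pow n

/-- The `β`-th moment of the normalized first split size converges to `1/(1+2β)`,
the `β`-th moment of the Beta(1/2,1) distribution. -/
theorem splitProb_moment_tendsto (β : ℝ) (hβ : 0 < β) :
    Tendsto
      (fun m : ℕ =>
        ∑ x ∈ Finset.Nat.antidiagonalTuple 3 (m - 1),
          splitProb m (x 0) (x 1) (x 2) * ((x 0 : ℝ) / (m : ℝ)) ^ β)
      atTop (nhds (1 / (1 + 2 * β))) := by
  rw [← tendsto_add_atTop_iff_nat 1]
  have h := tendsto_sum_splitWeight_mul (Real.continuous_rpow_const hβ.le).continuousOn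
  rw [integral_rpow_mul_betaHalfOneDensity (by linarith), add_comm (2 * β)] at h
  exact h.congr fun M => (sum_antidiagonalTuple_splitProb_mul M _).symm
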